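/- Second periodicity theorem: for each k ∈ {0,1,2,3}, if N ≥ 1 and p, q are natural numbers with 2^(N−1) ≤ p < 2^N and 2^(N−1) ≤ q < 2^N, then for every natural number m one has ω_k(p, q) = ω_k(p + m·2^N, q + m·2^N). -/

import Mathlib

/-- The five states of the Cayley–Dickson twist tree:
corner (C), top (T), left (L), diagonal (D) and interior (I). -/
inductive TwistState : Type
  | C | T | L | D | I
deriving DecidableEq

open TwistState

/-- The interior-node sign `i_k(a,b)` for the doubling product `P_k`, `k ∈ {0,1,2,3}`. -/
def iTwist (k : ℕ) (a b : Bool) : ℤ :=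
  match k with
  | 0 => if a = false ∧ b = false then -1 else 1
  | 1 => -1
  | 2 => 1
  | _ => if a = false ∧ b = false then 1 else -1

/-- One step of the twist-tree finite-state computation: from the current
(state, sign) pair, read a doublet of bits `(a, b)` and move to the new
(state, sign) pair. -/
def twistStep (k : ℕ) : TwistState × ℤ → Bool × Bool → TwistState × ℤ
  | (C, s), (false, false) => (C, s)
  | (C, s), (false, true)  => (T, s)
  | (C, s), (true, false)  => (L, s)
  | (C, s), (true, true)   => (D, -s)
  | (T, s), (false, false) => (T, s)
  | (T, s), (false, true)  => (T, s)
  | (T, s), (true, false)  => (I, s)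
  | (T, s), (true, true)   => (I, -s)
  | (L, s), (false, false) => (L, s)
  | (L, s), (false, true)  => (I, -s)
  | (L, s), (true, false)  => (L, s)
  | (L, s), (true, true)   => (I, s)
  | (D, s), (false, false) => (D, s)
  | (D, s), (false, true)  => (I, -s)
  | (D, s), (true, false)  => (I, s)
  | (D, s), (true, true)   => (D, s)
  | (I, s), (a, b)         => (I, s * iTwist k a b)

/-- The Cayley–Dickson twist `ω_k(p,q)` for the doubling product `P_k`:
write `p` and `q` in binary with a common number of bits (padding with
leading zeros), read the doublets of bits from most significant to least
significant, running the twist-tree automaton starting at state `C` with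
sign `+1`; the result is the final sign. -/
def omegaTwist (k : ℕ) (p q : ℕ) : ℤ :=
  (((List.range (max (Nat.size p) (Nat.size q))).reverse.map
      (fun i => (p.testBit i, q.testBit i))).foldl (twistStep k) (C, 1)).2

/-! Above bit `N - 1`, the binary expansions of `p + m·2^N` and `q + m·2^N` both spell out `m`,
so there the automaton reads only diagonal doublets `(a, a)`, which keep it in
`{(C, 1), (D, -1)}`. The leading bits of `p` and `q` are both `1`, and the doublet `(1, 1)` sends
both of these states to `(D, -1)`, the state `(p, q)` reaches after its own leading doublet; from
there both computations read the same bits. -/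

def bitDoublets (p q n : ℕ) : List (Bool × Bool) :=
  (List.range n).reverse.map fun i => (p.testBit i, q.testBit i)

lemma bitDoublets_succ (p q n : ℕ) :
    bitDoublets p q (n + 1) = (p.testBit n, q.testBit n) :: bitDoublets p q n := by
  simp [bitDoublets, List.range_succ]

lemma bitDoublets_add (p q n j : ℕ) :
    bitDoublets p q (n + j) = bitDoublets (p >>> n) (q >>> n) j ++ bitDoublets p q n := by
  simp [bitDoublets, List.range_add, List.map_reverse, Function.comp_def]

lemma bitDoublets_zero_zero (n : ℕ) : bitDoublets 0 0 n = List.replicate n (false, false) := by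
  simp [bitDoublets, List.map_const']

lemma bitDoublets_mod_two_pow (p q n : ℕ) :
    bitDoublets (p % 2 ^ n) (q % 2 ^ n) n = bitDoublets p q n := by
  refine List.map_congr_left fun i hi => ?_
  simp_all

lemma add_mul_two_pow_shiftRight {p n : ℕ} (hp : p < 2 ^ n) (m : ℕ) :
    (p + m * 2 ^ n) >>> n = m := by
  rw [Nat.shiftRight_eq_div_pow, Nat.add_mul_div_right _ _ (by positivity), Nat.div_eq_of_lt hp,
    zero_add]

lemma bitDoublets_add_mul_two_pow {p q n : ℕ} (hp : p < 2 ^ n) (hq : q < 2 ^ n) (m m' j : ℕ) :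
    bitDoublets (p + m * 2 ^ n) (q + m' * 2 ^ n) (n + j) =
      bitDoublets m m' j ++ bitDoublets p q n := by
  rw [bitDoublets_add, add_mul_two_pow_shiftRight hp, add_mul_two_pow_shiftRight hq,
    ← bitDoublets_mod_two_pow (p + _), Nat.add_mul_mod_self_right, Nat.add_mul_mod_self_right,
    Nat.mod_eq_of_lt hp, Nat.mod_eq_of_lt hq]

lemma add_mul_two_pow_lt {p n m j : ℕ} (hp : p < 2 ^ n) (hm : m < 2 ^ j) :
    p + m * 2 ^ n < 2 ^ (n + j) := by
  calc p + m * 2 ^ n < (m + 1) * 2 ^ n := by linarith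
    _ ≤ 2 ^ j * 2 ^ n := Nat.mul_le_mul_right _ hm
    _ = 2 ^ (n + j) := by rw [pow_add, mul_comm]

lemma foldl_twistStep_replicate_false_false (k n : ℕ) (s : ℤ) :
    (List.replicate n (false, false)).foldl (twistStep k) (C, s) = (C, s) := by
  induction n with
  | zero => rfl
  | succ n ih => rwa [List.replicate_succ, List.foldl_cons]

/-- Leading zero doublets leave the automaton in its initial state `C`, so any common
length `n` of the binary expansions computes `ω_k`. -/
lemma omegaTwist_eq_foldl_bitDoublets (k : ℕ) {p q n : ℕ} (hp : p < 2 ^ n) (hq : q < 2 ^ n) :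
    omegaTwist k p q = ((bitDoublets p q n).foldl (twistStep k) (C, 1)).2 := by
  set n₀ := max p.size q.size
  have hp₀ : p < 2 ^ n₀ := Nat.size_le.1 (le_max_left _ _)
  have hq₀ : q < 2 ^ n₀ := Nat.size_le.1 (le_max_right _ _)
  have hn : n = n₀ + (n - n₀) := by
    have := Nat.size_le.2 hp
    have := Nat.size_le.2 hq
    omega
  have hpad := bitDoublets_add_mul_two_pow hp₀ hq₀ 0 0 (n - n₀)
  rw [zero_mul, add_zero, add_zero, ← hn, bitDoublets_zero_zero] at hpad
  rw [hpad, List.foldl_append, foldl_twistStep_replicate_false_false]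
  rfl

/-- The states reachable from `(C, 1)` by reading doublets `(a, a)`. -/
def diagStates : Set (TwistState × ℤ) := {(C, 1), (D, -1)}

lemma foldl_twistStep_mem_diagStates (k : ℕ) {w : List (Bool × Bool)} (hw : ∀ x ∈ w, x.1 = x.2)
    {s : TwistState × ℤ} (hs : s ∈ diagStates) : w.foldl (twistStep k) s ∈ diagStates := by
  induction w generalizing s with
  | nil => exact hs
  | cons x w ih =>
    obtain ⟨a, b⟩ := x
    obtain rfl : a = b := hw _ List.mem_cons_self
    refine ih (fun x hx => hw x (List.mem_cons_of_mem _ hx)) ?_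
    rcases hs with rfl | rfl <;> cases a <;> simp [diagStates, twistStep]

lemma twistStep_true_true_of_mem_diagStates (k : ℕ) {s : TwistState × ℤ} (hs : s ∈ diagStates) :
    twistStep k s (true, true) = (D, -1) := by
  rcases hs with rfl | rfl <;> rfl

/-- Second periodicity theorem: for each `k ∈ {0,1,2,3}`, if `N ≥ 1`,
`2^(N-1) ≤ p < 2^N` and `2^(N-1) ≤ q < 2^N`, then for every natural number
`m`, `ω_k(p, q) = ω_k(p + m·2^N, q + m·2^N)`. -/
theorem omegaTwist_second_periodicity :
    ∀ k ∈ ({0, 1, 2, 3} : Finset ℕ), ∀ N p q : ℕ, 1 ≤ N →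
      2 ^ (N - 1) ≤ p → p < 2 ^ N → 2 ^ (N - 1) ≤ q → q < 2 ^ N →
      ∀ m : ℕ,
        omegaTwist k p q = omegaTwist k (p + m * 2 ^ N) (q + m * 2 ^ N) := by
  intro k _ N p q hN hp₁ hp₂ hq₁ hq₂ m
  obtain ⟨n, rfl⟩ : ∃ n, N = n + 1 := ⟨N - 1, by omega⟩
  rw [Nat.add_sub_cancel] at hp₁ hq₁
  have htop : bitDoublets p q (n + 1) = (true, true) :: bitDoublets p q n := by
    rw [bitDoublets_succ, Nat.testBit_of_two_pow_le_and_two_pow_add_one_gt hp₁ hp₂,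
      Nat.testBit_of_two_pow_le_and_two_pow_add_one_gt hq₁ hq₂]
  have hdiag : ∀ x ∈ bitDoublets m m m.size, x.1 = x.2 := by
    simp [bitDoublets]
  rw [omegaTwist_eq_foldl_bitDoublets k hp₂ hq₂,
    omegaTwist_eq_foldl_bitDoublets k (add_mul_two_pow_lt hp₂ m.lt_size_self)
      (add_mul_two_pow_lt hq₂ m.lt_size_self),
    bitDoublets_add_mul_two_pow hp₂ hq₂, List.foldl_append, htop, List.foldl_cons, List.foldl_cons,
    twistStep_true_true_of_mem_diagStates k (Or.inl rfl),
    twistStep_true_true_of_mem_diagStates k (foldl_twistStep_mem_diagStates k hdiag (Or.inl rfl))]
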